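/- Let (G,<) be an ordered group in which every convex jump is central, i.e., [H,G] ⊆ N for every convex jump (N,H) of (G,<). Let x, y ∈ G be elements that do not commute ([x,y] ≠ 1), and let A be the subgroup of G generated by {x,y}. Then there exists a normal subgroup B of A such that: (i) [x,y] ∉ B, so the quotient A/B is noncommutative; (ii) A/B is torsion-free, i.e., for every a ∈ A and every integer n ≥ 1, aⁿ ∈ B implies a ∈ B; and (iii) [[A,A],A] ⊆ B, so A/B is nilpotent of class two. -/

import Mathlib

/-!
Let `c = ⁅x, y⁆`. Convex subgroups of an ordered group form a chain, so the union `N` of the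
convex subgroups avoiding `c` and the intersection `H` of those containing `c` form a convex
jump, and `B = N ∩ ⟨x, y⟩` works. Centrality of the jump gives `⁅H, G⁆ ≤ N`: hence `N` is normal,
and `c ∈ H` is central modulo `N`. A two-generated group whose generators have central
commutator has central derived subgroup, so `⁅⁅A, A⁆, A⁆ ≤ N`. Convexity of `N` makes the
quotient torsion-free, and `c ∉ N` keeps it noncommutative.
-/

/-- A subgroup `C` of an ordered group is convex if whenever `x, z ∈ C`, `y ∈ G` and
`x ≤ y ≤ z`, then `y ∈ C`. -/
def Subgroup.IsConvex {G : Type*} [Group G] [Preorder G] (C : Subgroup G) : Prop :=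
  ∀ x ∈ C, ∀ z ∈ C, ∀ y : G, x ≤ y → y ≤ z → y ∈ C

/-- A pair `(N, H)` of convex subgroups is a convex jump if `N ⊊ H` and no convex subgroup
lies strictly between `N` and `H`. -/
def Subgroup.IsConvexJump {G : Type*} [Group G] [Preorder G] (N H : Subgroup G) : Prop :=
  N.IsConvex ∧ H.IsConvex ∧ N < H ∧ ∀ K : Subgroup G, K.IsConvex → ¬(N < K ∧ K < H)

open scoped commutatorElement

namespace Subgroup

theorem commutator_closure_pair_le {Q : Type*} [Group Q] {K : Subgroup Q} [K.Normal] {u v : Q}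
    (h : ⁅u, v⁆ ∈ K) : ⁅closure {u, v}, closure {u, v}⁆ ≤ K := by
  set π := QuotientGroup.mk' K
  have hcomm : Commute (π u) (π v) := by
    rwa [← commutatorElement_eq_one_iff_commute, ← map_commutatorElement,
      QuotientGroup.mk'_apply, QuotientGroup.eq_one_iff]
  have hbot : map π ⁅closure {u, v}, closure {u, v}⁆ = ⊥ := by
    rw [map_commutator, MonoidHom.map_closure, Set.image_pair, commutator_self_eq_bot_iff]
    refine isMulCommutative_closure ?_
    rintro p (rfl | rfl) q (rfl | rfl)
    exacts [rfl, hcomm.eq, hcomm.symm.eq, rfl]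
  rwa [map_eq_bot_iff, QuotientGroup.ker_mk'] at hbot

theorem commutator_commutator_closure_pair_le {Q : Type*} [Group Q] {N : Subgroup Q} [N.Normal]
    {u v : Q} (h : ∀ g, ⁅⁅u, v⁆, g⁆ ∈ N) :
    ⁅⁅closure {u, v}, closure {u, v}⁆, closure {u, v}⁆ ≤ N := by
  have : (upperCentralSeriesStep N).Normal := by
    rw [upperCentralSeriesStep_eq_comap_center]
    infer_instance
  calc ⁅⁅closure {u, v}, closure {u, v}⁆, closure {u, v}⁆
      ≤ ⁅upperCentralSeriesStep N, ⊤⁆ := commutator_mono (commutator_closure_pair_le h) le_top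
    _ ≤ N := commutator_le.mpr fun k hk g _ => hk g

section Preorder

variable {G : Type*} [Group G] [Preorder G]

def convexAvoiding (c : G) : Subgroup G := sSup {K | K.IsConvex ∧ c ∉ K}

def convexClosure (c : G) : Subgroup G := sInf {K | K.IsConvex ∧ c ∈ K}

theorem isConvex_sInf {S : Set (Subgroup G)} (hS : ∀ K ∈ S, K.IsConvex) : (sInf S).IsConvex := by
  intro a ha b hb g hag hgb
  rw [mem_sInf] at ha hb ⊢
  exact fun K hK => hS K hK a (ha K hK) b (hb K hK) g hag hgb

theorem mem_convexClosure_self (c : G) : c ∈ convexClosure c :=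
  mem_sInf.mpr fun _ hK => hK.2

end Preorder

theorem isConvex_bot {G : Type*} [Group G] [PartialOrder G] : (⊥ : Subgroup G).IsConvex := by
  rintro a ha b hb g hag hgb
  rw [mem_bot] at ha hb ⊢
  subst ha hb
  exact le_antisymm hgb hag

section LinearOrder

variable {G : Type*} [Group G] [LinearOrder G] [MulLeftMono G]

theorem IsConvex.le_total {C D : Subgroup G} (hC : C.IsConvex) (hD : D.IsConvex) :
    C ≤ D ∨ D ≤ C := by
  refine or_iff_not_imp_left.mpr fun hCD d hd => ?_
  obtain ⟨c, hcC, hcD⟩ := SetLike.not_le_iff_exists.mp hCD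
  have hmabs (a : G) : 1 ≤ |a|ₘ := by
    rcases eq_or_ne a 1 with rfl | ha
    · simp
    · exact (one_lt_mabs.mpr ha).le
  -- `|d|ₘ` lies below `|c|ₘ`, since otherwise convexity of `D` would put `c` into `D`.
  have hdc : |d|ₘ ≤ |c|ₘ := by
    by_contra! hcd
    exact hcD (mabs_mem_iff.mp
      (hD 1 (one_mem D) |d|ₘ (mabs_mem_iff.mpr hd) |c|ₘ (hmabs c) hcd.le))
  exact mabs_mem_iff.mp (hC 1 (one_mem C) |c|ₘ (mabs_mem_iff.mpr hcC) |d|ₘ (hmabs d) hdc)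

theorem IsConvex.mem_of_pow_mem {C : Subgroup G} (hC : C.IsConvex) {a : G} {n : ℕ} (hn : n ≠ 0)
    (h : a ^ n ∈ C) : a ∈ C := by
  rcases _root_.le_total 1 a with ha | ha
  · exact hC 1 (one_mem C) (a ^ n) h a ha (le_self_pow ha hn)
  · refine hC (a ^ n) h 1 (one_mem C) a ?_ ha
    simpa using pow_le_pow_right_of_le_one' ha (Nat.one_le_iff_ne_zero.mpr hn)

theorem mem_sSup_iff_of_isConvex {S : Set (Subgroup G)} (hS : ∀ K ∈ S, K.IsConvex)
    (hne : S.Nonempty) {g : G} : g ∈ sSup S ↔ ∃ K ∈ S, g ∈ K :=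
  mem_sSup_of_directedOn hne <| IsChain.directedOn fun _ hC _ hD _ => (hS _ hC).le_total (hS _ hD)

theorem isConvex_sSup {S : Set (Subgroup G)} (hS : ∀ K ∈ S, K.IsConvex) (hne : S.Nonempty) :
    (sSup S).IsConvex := by
  simp only [IsConvex, mem_sSup_iff_of_isConvex hS hne]
  rintro a ⟨C, hCS, haC⟩ b ⟨D, hDS, hbD⟩ g hag hgb
  rcases (hS C hCS).le_total (hS D hDS) with hCD | hDC
  · exact ⟨D, hDS, hS D hDS a (hCD haC) b hbD g hag hgb⟩
  · exact ⟨C, hCS, hS C hCS a haC b (hDC hbD) g hag hgb⟩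

theorem self_notMem_convexAvoiding {c : G} (hc : c ≠ 1) : c ∉ convexAvoiding c := by
  have hne : {K : Subgroup G | K.IsConvex ∧ c ∉ K}.Nonempty := ⟨⊥, isConvex_bot, by simpa⟩
  rw [convexAvoiding, mem_sSup_iff_of_isConvex (fun K hK => hK.1) hne]
  rintro ⟨K, hK, hcK⟩
  exact hK.2 hcK

theorem isConvexJump_convexAvoiding_convexClosure {c : G} (hc : c ≠ 1) :
    (convexAvoiding c).IsConvexJump (convexClosure c) := by
  have hne : {K : Subgroup G | K.IsConvex ∧ c ∉ K}.Nonempty := ⟨⊥, isConvex_bot, by simpa⟩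
  have hle : convexAvoiding c ≤ convexClosure c :=
    sSup_le fun K hK => le_sInf fun K' hK' =>
      (hK.1.le_total hK'.1).resolve_right fun h => hK.2 (h hK'.2)
  refine ⟨isConvex_sSup (fun K hK => hK.1) hne, isConvex_sInf fun K hK => hK.1,
    SetLike.lt_iff_le_and_exists.mpr ⟨hle, c, mem_convexClosure_self c,
      self_notMem_convexAvoiding hc⟩, fun K hK ⟨hNK, hKH⟩ => ?_⟩
  by_cases hcK : c ∈ K
  · exact hKH.not_ge (sInf_le ⟨hK, hcK⟩)
  · exact hNK.not_ge (le_sSup ⟨hK, hcK⟩)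

end LinearOrder

end Subgroup

theorem exists_normal_with_torsionfree_class_two_quotient_general (G : Type*) [Group G]
    [LinearOrder G]
    [CovariantClass G G (· * ·) (· < ·)]
    (hcentral : ∀ N H : Subgroup G, N.IsConvexJump H → ⁅H, (⊤ : Subgroup G)⁆ ≤ N)
    (x y : G) (hxy : ⁅x, y⁆ ≠ 1) :
    ∃ B : Subgroup G, B ≤ Subgroup.closure {x, y} ∧
      (∀ b ∈ B, ∀ a ∈ Subgroup.closure {x, y}, a * b * a⁻¹ ∈ B) ∧
      ⁅x, y⁆ ∉ B ∧
      (∀ a ∈ Subgroup.closure {x, y}, ∀ n : ℕ, 1 ≤ n → a ^ n ∈ B → a ∈ B) ∧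
      ⁅⁅Subgroup.closure {x, y}, Subgroup.closure {x, y}⁆,
          Subgroup.closure ({x, y} : Set G)⁆ ≤ B := by
  have := covariantClass_le_of_lt G G (· * ·)
  set A := Subgroup.closure ({x, y} : Set G)
  have hjump := Subgroup.isConvexJump_convexAvoiding_convexClosure hxy
  set N := Subgroup.convexAvoiding ⁅x, y⁆
  have hHN := hcentral _ _ hjump
  have hN : N.Normal := Subgroup.commutator_top_right_le_iff.mp
    ((Subgroup.commutator_mono hjump.2.2.1.le le_rfl).trans hHN)
  refine ⟨N ⊓ A, inf_le_right, fun b hb a ha => ?_,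
    fun h => Subgroup.self_notMem_convexAvoiding hxy h.1,
    fun a ha n hn h => ⟨hjump.1.mem_of_pow_mem (by omega) h.1, ha⟩, le_inf ?_ ?_⟩
  · obtain ⟨hbN, hbA⟩ := Subgroup.mem_inf.mp hb
    exact ⟨hN.conj_mem b hbN a, A.mul_mem (A.mul_mem ha hbA) (A.inv_mem ha)⟩
  · exact Subgroup.commutator_commutator_closure_pair_le fun g => hHN
      (Subgroup.commutator_mem_commutator (Subgroup.mem_convexClosure_self _) (Subgroup.mem_top g))
  · exact (Subgroup.commutator_mono A.commutator_le_self le_rfl).trans A.commutator_le_self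

/-- Let `(G,<)` be an ordered group in which every convex jump is central.
Let `x, y ∈ G` be noncommuting elements and let `A = ⟨x, y⟩`. Then there is a normal
subgroup `B` of `A` such that `[x,y] ∉ B` (so `A/B` is noncommutative), `A/B` is
torsion-free, and `[[A,A],A] ⊆ B` (so `A/B` is nilpotent of class two). -/
theorem exists_normal_with_torsionfree_class_two_quotient (G : Type*) [Group G]
    [LinearOrder G]
    [CovariantClass G G (· * ·) (· < ·)]
    [CovariantClass G G (Function.swap (· * ·)) (· < ·)]
    (hcentral : ∀ N H : Subgroup G, N.IsConvexJump H → ⁅H, (⊤ : Subgroup G)⁆ ≤ N)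
    (x y : G) (hxy : ⁅x, y⁆ ≠ 1) :
    ∃ B : Subgroup G, B ≤ Subgroup.closure {x, y} ∧
      (∀ b ∈ B, ∀ a ∈ Subgroup.closure {x, y}, a * b * a⁻¹ ∈ B) ∧
      ⁅x, y⁆ ∉ B ∧
      (∀ a ∈ Subgroup.closure {x, y}, ∀ n : ℕ, 1 ≤ n → a ^ n ∈ B → a ∈ B) ∧
      ⁅⁅Subgroup.closure {x, y}, Subgroup.closure {x, y}⁆,
          Subgroup.closure ({x, y} : Set G)⁆ ≤ B :=
  exists_normal_with_torsionfree_class_two_quotient_general G hcentral x y hxy
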